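/- If A ≤* B in the star order (A*A = A*B and AA* = BA*), then A ≤⁻ B in the minus order (there exist bounded idempotents Q̃, Q with A = Q̃B = BQ). -/

import Mathlib

open ContinuousLinearMap
open scoped InnerProduct

/- The idempotents are the orthogonal projections onto the closed ranges of `A` and of `A†`.
The relation `A† A = A† B` says that `B x - A x ∈ ker A† = (range A)ᗮ`, so projecting `B x` onto
the closure of `range A` recovers `A x`; the relation `A A† = B A†` is the same statement for the
adjoints. -/

namespace ContinuousLinearMap

variable {𝕜 E F : Type*} [RCLike 𝕜] [NormedAddCommGroup E] [InnerProductSpace 𝕜 E] [CompleteSpace E]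
  [NormedAddCommGroup F] [InnerProductSpace 𝕜 F] [CompleteSpace F]

theorem eq_starProjection_comp_of_adjoint_comp_eq {A B : E →L[𝕜] F} (h : A† ∘L A = A† ∘L B) :
    A = A.range.topologicalClosure.starProjection ∘L B := by
  ext x
  refine (Submodule.eq_starProjection_of_mem_orthogonal
    (A.range.le_topologicalClosure ⟨x, rfl⟩) ?_).symm
  rw [Submodule.orthogonal_closure, orthogonal_range, LinearMap.mem_ker, map_sub, sub_eq_zero]
  exact (DFunLike.congr_fun h x).symm

theorem eq_comp_starProjection_of_comp_adjoint_eq {A B : E →L[𝕜] F} (h : A ∘L A† = B ∘L A†) :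
    A = B ∘L A†.range.topologicalClosure.starProjection := by
  have h' : A†† ∘L A† = A†† ∘L B† := by
    simpa only [adjoint_comp, adjoint_adjoint] using congrArg adjoint h
  have := congrArg adjoint (eq_starProjection_comp_of_adjoint_comp_eq h')
  rwa [adjoint_adjoint, adjoint_comp, adjoint_adjoint,
    (isSelfAdjoint_starProjection _).adjoint_eq] at this

end ContinuousLinearMap

theorem stmt4 {H K : Type*} [NormedAddCommGroup H] [InnerProductSpace ℂ H] [CompleteSpace H]
    [NormedAddCommGroup K] [InnerProductSpace ℂ K] [CompleteSpace K]
    (A B : H →L[ℂ] K)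
    (h1 : (adjoint A) ∘L A = (adjoint A) ∘L B)
    (h2 : A ∘L (adjoint A) = B ∘L (adjoint A)) :
    ∃ (Qt : K →L[ℂ] K) (Q : H →L[ℂ] H),
      Qt ∘L Qt = Qt ∧ Q ∘L Q = Q ∧ A = Qt ∘L B ∧ A = B ∘L Q :=
  ⟨_, _, Submodule.isIdempotentElem_starProjection _, Submodule.isIdempotentElem_starProjection _,
    eq_starProjection_comp_of_adjoint_comp_eq h1, eq_comp_starProjection_of_comp_adjoint_eq h2⟩
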